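/- arXiv:1703.10637 — 4 statements merged into one kernel-verified Lean document; each statement's English description precedes it below -/
import Mathlib

section
/- Let x ∈ ℝⁿ and κ ≤ n. Then ‖x‖₀ ≤ κ (i.e., x has at most κ nonzero components) if and only if there exists y ∈ ℝⁿ with 0 ≤ yᵢ ≤ 1 for all i, xᵢ·yᵢ = 0 for all i, and ∑ᵢ yᵢ ≥ n − κ. -/
/-! The feasible `y` are dominated by the indicator of the zero set of `x`, which is itself
feasible, so the largest attainable `∑ i, y i` is the number of zeros of `x`, i.e. `n - ‖x‖₀`. -/

open Finset

section

variable {ι R : Type*} [Fintype ι] [DecidableEq R]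

theorem sum_le_card_filter_eq_zero [Semiring R] [PartialOrder R] [IsOrderedAddMonoid R]
    [NoZeroDivisors R] {x y : ι → R} (hy : ∀ i, y i ≤ 1) (hxy : ∀ i, x i * y i = 0) :
    ∑ i, y i ≤ #{i | x i = 0} := by
  calc ∑ i, y i ≤ ∑ i, if x i = 0 then (1 : R) else 0 := by
        refine sum_le_sum fun i _ => ?_
        split_ifs with hx
        · exact hy i
        · exact ((mul_eq_zero.mp (hxy i)).resolve_left hx).le
    _ = #{i | x i = 0} := by rw [sum_boole]

theorem card_filter_ne_zero_le_iff [Zero R] (x : ι → R) (κ : ℕ) :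
    #{i | x i ≠ 0} ≤ κ ↔ (Fintype.card ι : ℝ) - κ ≤ #{i | x i = 0} := by
  have hsplit := card_filter_add_card_filter_not (s := univ) (fun i => x i = 0)
  rw [card_univ] at hsplit
  rw [sub_le_iff_le_add, ← hsplit]
  exact_mod_cast (Nat.add_le_add_iff_left).symm

end

theorem card_constraint_continuous_reformulation_general (n κ : ℕ)
    (x : Fin n → ℝ) :
    (Finset.univ.filter (fun i => x i ≠ 0)).card ≤ κ ↔
      ∃ y : Fin n → ℝ,
        (∀ i, 0 ≤ y i ∧ y i ≤ 1) ∧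
        (∀ i, x i * y i = 0) ∧
        ((n : ℝ) - κ ≤ ∑ i, y i) := by
  rw [card_filter_ne_zero_le_iff, Fintype.card_fin]
  constructor
  · intro h
    refine ⟨fun i => if x i = 0 then 1 else 0, fun i => ?_, fun i => ?_, by rwa [sum_boole]⟩ <;>
      by_cases hx : x i = 0 <;> simp [hx]
  · rintro ⟨y, hy, hxy, hsum⟩
    exact hsum.trans (sum_le_card_filter_eq_zero (fun i => (hy i).2) hxy)

theorem card_constraint_continuous_reformulation (n κ : ℕ) (hκ : κ ≤ n)
    (x : Fin n → ℝ) :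
    (Finset.univ.filter (fun i => x i ≠ 0)).card ≤ κ ↔
      ∃ y : Fin n → ℝ,
        (∀ i, 0 ≤ y i ∧ y i ≤ 1) ∧
        (∀ i, x i * y i = 0) ∧
        ((n : ℝ) - κ ≤ ∑ i, y i) :=
  card_constraint_continuous_reformulation_general n κ x
end

section
/- Let f, g₁,…,gₘ : ℝⁿ → ℝ be convex differentiable functions and h : ℝⁿ → ℝᵖ be affine. Suppose (x*, y*) is an S-stationary point of the problem minimize f(x) subject to g(x) ≤ 0, h(x) = 0, 0 ≤ y ≤ e, x∘y = 0, eᵀy ≥ n − κ; i.e., there exist λ ∈ ℝᵐ with λ ≥ 0, μ ∈ ℝᵖ, γ ∈ ℝⁿ such that ∇f(x*) + ∑ᵢ λᵢ∇gᵢ(x*) + ∑ᵢ μᵢ∇hᵢ(x*) + γ = 0, λᵢ·gᵢ(x*) = 0 for all i, and γᵢ = 0 for all i with y*ᵢ = 0. Then (x*, y*) is a local minimizer of this problem. -/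
/-!
For a convex program, the KKT conditions at `x*` give `f x* ≤ f x` for every `x` satisfying
`g x ≤ 0` and `h x = 0`, via the gradient inequalities of `f` and of the `gᵢ`. The only nonconvex
constraint is `x ∘ y = 0`, and it is handled locally: every `y` close enough to `y*` is nonzero
wherever `y*` is, so a feasible `x` vanishes there, as `x*` does. Since `γ` is supported where `y*`
is nonzero, `γ ⬝ (x - x*) = 0`; since `h` is affine, `A (x - x*) = 0`. So the stationarity equation
in direction `x - x*` reduces to the KKT condition of the convex program.
-/

open Filter Topology

section Convex

variable {E : Type*} [NormedAddCommGroup E] [NormedSpace ℝ E] {s : Set E} {a x : E}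

theorem ConvexOn.apply_sub_le_of_hasFDerivAt {f : E → ℝ} {f' : E →L[ℝ] ℝ}
    (hf : ConvexOn ℝ s f) (ha : a ∈ s) (hx : x ∈ s) (hf' : HasFDerivAt f f' a) :
    f' (x - a) ≤ f x - f a := by
  set ℓ : ℝ →ᵃ[ℝ] E := AffineMap.lineMap a x
  have hline : ConvexOn ℝ (ℓ ⁻¹' s) (f ∘ ℓ) := hf.comp_affineMap ℓ
  have hderiv : HasDerivAt (f ∘ ℓ) (f' (x - a)) 0 := by
    have hf'' : HasFDerivAt f f' (ℓ 0) := by simpa [ℓ] using hf'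
    exact hf''.comp_hasDerivAt 0 AffineMap.hasDerivAt_lineMap
  simpa [slope, ℓ] using
    hline.le_slope_of_hasDerivAt (by simpa [ℓ] using ha) (by simpa [ℓ] using hx) zero_lt_one hderiv

theorem ConvexOn.le_of_lagrangian_fderiv_nonneg {ι : Type*} [Fintype ι] {f : E → ℝ}
    {g : ι → E → ℝ} {lam : ι → ℝ} (hf : ConvexOn ℝ s f) (hg : ∀ i, ConvexOn ℝ s (g i))
    (ha : a ∈ s) (hx : x ∈ s) (hfd : DifferentiableAt ℝ f a)
    (hgd : ∀ i, DifferentiableAt ℝ (g i) a) (hlam : ∀ i, 0 ≤ lam i)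
    (hcs : ∀ i, lam i * g i a = 0) (hgx : ∀ i, g i x ≤ 0)
    (hstat : 0 ≤ fderiv ℝ f a (x - a) + ∑ i, lam i * fderiv ℝ (g i) a (x - a)) :
    f a ≤ f x := by
  have hterm : ∀ i, lam i * fderiv ℝ (g i) a (x - a) ≤ 0 := fun i => by
    have hgrad := (hg i).apply_sub_le_of_hasFDerivAt ha hx (hgd i).hasFDerivAt
    calc lam i * fderiv ℝ (g i) a (x - a) ≤ lam i * (g i x - g i a) :=
          mul_le_mul_of_nonneg_left hgrad (hlam i)
      _ = lam i * g i x := by rw [mul_sub, hcs i, sub_zero]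
      _ ≤ 0 := mul_nonpos_of_nonneg_of_nonpos (hlam i) (hgx i)
  have hsum := Finset.sum_nonpos fun i (_ : i ∈ Finset.univ) => hterm i
  linarith [hf.apply_sub_le_of_hasFDerivAt ha hx hfd.hasFDerivAt]

end Convex

theorem eventually_nhds_forall_ne_zero {ι M : Type*} [Finite ι] [TopologicalSpace M]
    [T1Space M] [Zero M] (y₀ : ι → M) : ∀ᶠ y in 𝓝 y₀, ∀ i, y₀ i ≠ 0 → y i ≠ 0 := by
  refine eventually_all.2 fun i => ?_
  by_cases hi : y₀ i = 0
  · simp [hi]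
  · exact ((continuous_apply i).continuousAt.eventually_ne hi).mono fun _ hy _ => hy

theorem s_stationary_implies_local_min_convex_general (n m p κ : ℕ)
    (f : (Fin n → ℝ) → ℝ) (g : Fin m → (Fin n → ℝ) → ℝ)
    (A : Fin p → (Fin n → ℝ) →ₗ[ℝ] ℝ) (b : Fin p → ℝ)
    (hf : ConvexOn ℝ Set.univ f) (hfd : Differentiable ℝ f)
    (hg : ∀ i, ConvexOn ℝ Set.univ (g i)) (hgd : ∀ i, Differentiable ℝ (g i))
    -- the affine equality constraints h i x = A i x + b i
    (h : Fin p → (Fin n → ℝ) → ℝ) (hA : ∀ i x, h i x = A i x + b i)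
    (xs ys : Fin n → ℝ)
    -- feasibility of (x*, y*)
    (hhfeas : ∀ i, h i xs = 0)
    (hcomp : ∀ i, xs i * ys i = 0)
    -- S-stationarity
    (lam : Fin m → ℝ) (mu : Fin p → ℝ) (gam : Fin n → ℝ)
    (hlam : ∀ i, 0 ≤ lam i)
    (hstat : ∀ v : Fin n → ℝ,
      fderiv ℝ f xs v + ∑ i, lam i * fderiv ℝ (g i) xs v
        + ∑ i, mu i * A i v + ∑ i, gam i * v i = 0)
    (hcs : ∀ i, lam i * g i xs = 0)
    (hgam : ∀ i, ys i = 0 → gam i = 0) :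
    -- conclusion: (x*, y*) is a local minimizer of the reformulated problem
    ∃ ε > 0, ∀ x y : Fin n → ℝ,
      (∀ i, g i x ≤ 0) → (∀ i, h i x = 0) →
      (∀ i, 0 ≤ y i ∧ y i ≤ 1) → (∀ i, x i * y i = 0) →
      ((n : ℝ) - κ ≤ ∑ i, y i) →
      ‖x - xs‖ < ε → ‖y - ys‖ < ε →
      f xs ≤ f x := by
  obtain ⟨ε, hε, hsupp⟩ := Metric.eventually_nhds_iff.1 (eventually_nhds_forall_ne_zero ys)
  refine ⟨ε, hε, fun x y hgx hhx _ hcompxy _ _ hy => ?_⟩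
  have hA0 : ∀ i, A i (x - xs) = 0 := fun i => by
    linarith [map_sub (A i) x xs, hA i x, hA i xs, hhx i, hhfeas i]
  have hgam0 : ∀ i, gam i * (x - xs) i = 0 := fun i => by
    by_cases hi : ys i = 0
    · simp [hgam i hi]
    · have hyi : y i ≠ 0 := hsupp (by rwa [dist_eq_norm]) i hi
      have hxs : xs i = 0 := (mul_eq_zero.1 (hcomp i)).resolve_right hi
      have hx : x i = 0 := (mul_eq_zero.1 (hcompxy i)).resolve_right hyi
      simp [hx, hxs]
  refine hf.le_of_lagrangian_fderiv_nonneg hg (Set.mem_univ xs) (Set.mem_univ x) (hfd xs)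
    (fun i => hgd i xs) hlam hcs hgx ?_
  have hstat' := hstat (x - xs)
  simp only [hA0, hgam0, mul_zero, Finset.sum_const_zero, add_zero] at hstat'
  exact hstat'.ge

/-- In the convex case, S-stationary points of the continuous reformulation of the
cardinality-constrained problem are local minimizers. -/
theorem s_stationary_implies_local_min_convex (n m p κ : ℕ)
    (f : (Fin n → ℝ) → ℝ) (g : Fin m → (Fin n → ℝ) → ℝ)
    (A : Fin p → (Fin n → ℝ) →ₗ[ℝ] ℝ) (b : Fin p → ℝ)
    (hf : ConvexOn ℝ Set.univ f) (hfd : Differentiable ℝ f)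
    (hg : ∀ i, ConvexOn ℝ Set.univ (g i)) (hgd : ∀ i, Differentiable ℝ (g i))
    -- the affine equality constraints h i x = A i x + b i
    (h : Fin p → (Fin n → ℝ) → ℝ) (hA : ∀ i x, h i x = A i x + b i)
    (xs ys : Fin n → ℝ)
    -- feasibility of (x*, y*)
    (hgfeas : ∀ i, g i xs ≤ 0) (hhfeas : ∀ i, h i xs = 0)
    (hy01 : ∀ i, 0 ≤ ys i ∧ ys i ≤ 1) (hcomp : ∀ i, xs i * ys i = 0)
    (hsum : (n : ℝ) - κ ≤ ∑ i, ys i)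
    -- S-stationarity
    (lam : Fin m → ℝ) (mu : Fin p → ℝ) (gam : Fin n → ℝ)
    (hlam : ∀ i, 0 ≤ lam i)
    (hstat : ∀ v : Fin n → ℝ,
      fderiv ℝ f xs v + ∑ i, lam i * fderiv ℝ (g i) xs v
        + ∑ i, mu i * A i v + ∑ i, gam i * v i = 0)
    (hcs : ∀ i, lam i * g i xs = 0)
    (hgam : ∀ i, ys i = 0 → gam i = 0) :
    -- conclusion: (x*, y*) is a local minimizer of the reformulated problem
    ∃ ε > 0, ∀ x y : Fin n → ℝ,
      (∀ i, g i x ≤ 0) → (∀ i, h i x = 0) →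
      (∀ i, 0 ≤ y i ∧ y i ≤ 1) → (∀ i, x i * y i = 0) →
      ((n : ℝ) - κ ≤ ∑ i, y i) →
      ‖x - xs‖ < ε → ‖y - ys‖ < ε →
      f xs ≤ f x :=
  s_stationary_implies_local_min_convex_general n m p κ f g A b hf hfd hg hgd h hA xs ys hhfeas
    hcomp lam mu gam hlam hstat hcs hgam
end

section
/- Let (x*, y*) be feasible for the continuous reformulation (g(x) ≤ 0, h(x) = 0, 0 ≤ y ≤ e, x∘y = 0, eᵀy ≥ n − κ), and suppose tᵏ ↓ 0 with tᵏ > 0 and (xᵏ, yᵏ) → (x*, y*) is a sequence of KKT points of the Scholtes-regularized problems NLP(tᵏ). If CC-MFCQ holds at (x*, y*), then (x*, y*) is S-stationary; that is, there exist λ ≥ 0, μ, γ with ∇f(x*) + ∑ᵢ λᵢ∇gᵢ(x*) + ∑ᵢ μᵢ∇hᵢ(x*) + γ = 0, λᵢgᵢ(x*) = 0, and γᵢ = 0 whenever y*ᵢ = 0. -/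
/-!
Scale the multipliers `(1, λᵏ, μᵏ, γ̃ᵏ ∘ yᵏ)` of NLP(tᵏ) by `(1 + ‖(λᵏ, μᵏ, γ̃ᵏ ∘ yᵏ)‖)⁻¹` and pass
to a convergent subsequence, with limit `(c, λ, μ, γ)` satisfying `c + ‖(λ, μ, γ)‖ = 1`.
Stationarity, sign conditions and complementarity survive the limit. The delicate point is
`γᵢ = 0` when `y*ᵢ = 0`: the `y`-block of the KKT conditions gives `|γ̃ᵢ yᵢ| tᵏ = δᵏ yᵢ²` whenever
`yᵢ < 1`, and if `δᵏ > 0` the cardinality constraint is active, which forces some `j` with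
`y*ⱼ ≠ 0` to have `yⱼ < 1`; hence `|γ̃ᵢ yᵢ| ≤ (yᵢ / yⱼ)² |γ̃ⱼ yⱼ|`, which is negligible against the
normalization as `yᵢ → 0`. Finally CC-MFCQ rules out `c = 0`, and dividing by `c` gives
S-stationary multipliers.
-/

open Filter Topology Finset

section ScholtesKKT

variable {ι : Type*} [Fintype ι]

theorem exists_ne_zero_and_lt_one_of_sum_le {a b : ι → ℝ} (ha : ∀ i, 0 < a i)
    (hb : ∀ i, b i ≤ 1) (hab : ∑ i, a i ≤ ∑ i, b i) (hb0 : ∃ i, b i = 0) :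
    ∃ j, b j ≠ 0 ∧ a j < 1 := by
  by_contra! H
  obtain ⟨i, hi⟩ := hb0
  have hle : ∀ j ∈ univ, b j ≤ a j := fun j _ => by
    by_cases hj : b j = 0
    · exact hj ▸ (ha j).le
    · exact (hb j).trans (H j hj)
  linarith [sum_lt_sum hle ⟨i, mem_univ i, hi ▸ ha i⟩]

/-- Feasibility in `y` and the `y`-part of the KKT conditions of NLP(t), with multipliers `δ` for
`eᵀy ≥ b`, `ν` for `0 ≤ y ≤ e` and `γ` for `-te ≤ x ∘ y ≤ te`. -/
structure IsScholtesKKTInY (t δ b : ℝ) (x y γ ν : ι → ℝ) : Prop where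
  t_pos : 0 < t
  y_nonneg : ∀ i, 0 ≤ y i
  y_le_one : ∀ i, y i ≤ 1
  le_sum : b ≤ ∑ i, y i
  delta_nonneg : 0 ≤ δ
  delta_eq_zero : ∑ i, y i ≠ b → δ = 0
  stationary : ∀ i, -δ + ν i + γ i * x i = 0
  gamma_eq_zero : ∀ i, x i * y i ≠ t ∧ x i * y i ≠ -t → γ i = 0
  nu_nonpos : ∀ i, y i = 0 → ν i ≤ 0
  nu_eq_zero : ∀ i, y i ≠ 0 ∧ y i ≠ 1 → ν i = 0

namespace IsScholtesKKTInY

variable {t δ b : ℝ} {x y γ ν : ι → ℝ}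

theorem abs_mul_mul_eq (hK : IsScholtesKKTInY t δ b x y γ ν) {i : ι} (hi : y i < 1) :
    |γ i * y i| * t = δ * y i ^ 2 := by
  rcases (hK.y_nonneg i).eq_or_lt with h0 | hpos
  · simp [← h0]
  have hγx : γ i * x i = δ := by
    linarith [hK.stationary i, hK.nu_eq_zero i ⟨hpos.ne', hi.ne⟩]
  by_cases hγ : γ i = 0
  · rw [hγ, zero_mul] at hγx
    simp [hγ, ← hγx]
  have hxy : |x i * y i| = t := by
    refine (abs_eq hK.t_pos.le).2 ?_
    by_contra! hne
    exact hγ (hK.gamma_eq_zero i hne)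
  calc |γ i * y i| * t = |γ i * y i| * |x i * y i| := by rw [hxy]
    _ = |γ i * x i| * y i ^ 2 := by
      rw [← abs_mul, ← abs_of_nonneg (sq_nonneg (y i)), ← abs_mul]
      ring_nf
    _ = δ * y i ^ 2 := by rw [hγx, abs_of_nonneg hK.delta_nonneg]

theorem pos_of_delta_pos (hK : IsScholtesKKTInY t δ b x y γ ν) (hδ : 0 < δ) (i : ι) :
    0 < y i := by
  refine (hK.y_nonneg i).lt_of_ne fun h0 => ?_
  have hγ : γ i = 0 := hK.gamma_eq_zero i (by simp [← h0, hK.t_pos.ne, hK.t_pos.ne'])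
  linarith [hK.stationary i, hK.nu_nonpos i h0.symm, hγ ▸ zero_mul (x i)]

theorem abs_mul_le (hK : IsScholtesKKTInY t δ b x y γ ν) {ys : ι → ℝ} (hys : ∀ j, ys j ≤ 1)
    (hb : b ≤ ∑ j, ys j) {i : ι} (hi : ys i = 0) (hyi : y i < 1) :
    |γ i * y i| ≤ (∑ j ∈ univ.filter (ys · ≠ 0), (y j)⁻¹ ^ 2) * y i ^ 2 * ‖γ * y‖ := by
  have hC : 0 ≤ ∑ j ∈ univ.filter (ys · ≠ 0), (y j)⁻¹ ^ 2 := by positivity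
  rcases hK.delta_nonneg.eq_or_lt with hδ | hδ
  · have h := hK.abs_mul_mul_eq hyi
    rw [← hδ, zero_mul, mul_eq_zero] at h
    rw [h.resolve_right hK.t_pos.ne']
    positivity
  have hpos := hK.pos_of_delta_pos hδ
  have hsum : ∑ j, y j = b := by_contra fun h => hδ.ne' (hK.delta_eq_zero h)
  obtain ⟨j, hj, hj1⟩ := exists_ne_zero_and_lt_one_of_sum_le hpos hys (hsum ▸ hb) ⟨i, hi⟩
  have hij : |γ i * y i| * y j ^ 2 = |γ j * y j| * y i ^ 2 := by
    refine mul_right_cancel₀ hK.t_pos.ne' ?_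
    linear_combination y j ^ 2 * hK.abs_mul_mul_eq hyi - y i ^ 2 * hK.abs_mul_mul_eq hj1
  have hγj : |γ j * y j| ≤ ‖γ * y‖ := norm_le_pi_norm (γ * y) j
  have hyj : (y j)⁻¹ ^ 2 ≤ ∑ j ∈ univ.filter (ys · ≠ 0), (y j)⁻¹ ^ 2 :=
    single_le_sum (f := fun j => (y j)⁻¹ ^ 2) (fun _ _ => by positivity) (by simpa using hj)
  calc |γ i * y i| = |γ j * y j| * y i ^ 2 * (y j)⁻¹ ^ 2 := by
        field_simp [(hpos j).ne']
        linarith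
    _ ≤ ‖γ * y‖ * y i ^ 2 * ∑ j ∈ univ.filter (ys · ≠ 0), (y j)⁻¹ ^ 2 := by gcongr
    _ = _ := by ring

end IsScholtesKKTInY

theorem apply_eq_zero_of_tendsto_smul_mul {α : Type*} {l : Filter α} [l.NeBot]
    {t δ : α → ℝ} {b : ℝ} {x y γ ν : α → ι → ℝ} {s : α → ℝ} {ys γs : ι → ℝ}
    (hK : ∀ a, IsScholtesKKTInY (t a) (δ a) b (x a) (y a) (γ a) (ν a))
    (hy : Tendsto y l (𝓝 ys)) (hs : ∀ a, 0 ≤ s a)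
    (hγ : Tendsto (fun a => s a • (γ a * y a)) l (𝓝 γs)) {i : ι} (hi : ys i = 0) :
    γs i = 0 := by
  have hys : ∀ j, ys j ≤ 1 := fun j => le_of_tendsto' (hy.apply_nhds j) fun a => (hK a).y_le_one j
  have hb : b ≤ ∑ j, ys j :=
    ge_of_tendsto' (tendsto_finsetSum univ fun j _ => hy.apply_nhds j) fun a => (hK a).le_sum
  have hbound : ∀ᶠ a in l, |s a * (γ a i * y a i)|
      ≤ (∑ j ∈ univ.filter (ys · ≠ 0), (y a j)⁻¹ ^ 2) * y a i ^ 2 * ‖s a • (γ a * y a)‖ := by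
    filter_upwards [(hy.apply_nhds i).eventually_lt_const (hi ▸ zero_lt_one)] with a ha
    rw [abs_mul, norm_smul, Real.norm_of_nonneg (hs a), abs_of_nonneg (hs a)]
    have := mul_le_mul_of_nonneg_left ((hK a).abs_mul_le hys hb hi ha) (hs a)
    linarith
  have hlim : Tendsto (fun a => (∑ j ∈ univ.filter (ys · ≠ 0), (y a j)⁻¹ ^ 2) * y a i ^ 2
      * ‖s a • (γ a * y a)‖) l (𝓝 0) := by
    have := ((tendsto_finsetSum (univ.filter (ys · ≠ 0)) fun j hj => ((hy.apply_nhds j).inv₀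
      (mem_filter.1 hj).2).pow 2).mul ((hy.apply_nhds i).pow 2)).mul hγ.norm
    simpa [hi] using this
  exact abs_nonpos_iff.1 (le_of_tendsto_of_tendsto (hγ.apply_nhds i).abs hlim hbound)

end ScholtesKKT

theorem exists_subseq_tendsto_normalized {E : Type*} [NormedAddCommGroup E] [NormedSpace ℝ E]
    [ProperSpace E] (u : ℕ → E) :
    ∃ (φ : ℕ → ℕ) (w : ℝ × E), StrictMono φ ∧ 0 ≤ w.1 ∧ w.1 + ‖w.2‖ = 1 ∧
      Tendsto (fun k => (1 + ‖u (φ k)‖)⁻¹ • ((1 : ℝ), u (φ k))) atTop (𝓝 w) := by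
  set z : ℕ → ℝ × E := fun k => (1 + ‖u k‖)⁻¹ • ((1 : ℝ), u k)
  have hz0 : ∀ k, 0 ≤ (z k).1 := fun k => by
    simp only [z, Prod.smul_fst, smul_eq_mul, mul_one]
    positivity
  have hz1 : ∀ k, (z k).1 + ‖(z k).2‖ = 1 := fun k => by
    have : 0 < 1 + ‖u k‖ := by positivity
    simp only [z, Prod.smul_fst, Prod.smul_snd, smul_eq_mul, norm_smul, Real.norm_eq_abs,
      abs_of_pos (inv_pos.2 this)]
    field_simp
  have hzb : ∀ k, z k ∈ Metric.closedBall (0 : ℝ × E) 1 := fun k => by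
    rw [mem_closedBall_zero_iff, Prod.norm_def, Real.norm_of_nonneg (hz0 k)]
    exact max_le (by linarith [hz1 k, norm_nonneg (z k).2]) (by linarith [hz1 k, hz0 k])
  obtain ⟨w, -, φ, hφ, hw⟩ := (isCompact_closedBall (0 : ℝ × E) 1).tendsto_subseq hzb
  refine ⟨φ, w, hφ, ge_of_tendsto' hw.fst_nhds fun k => hz0 _, ?_, hw⟩
  exact tendsto_nhds_unique ((hw.fst_nhds.add hw.snd_nhds.norm).congr fun k => hz1 (φ k))
    tendsto_const_nhds

section Stationarity

variable {ι I J : Type*} [Fintype ι] [Fintype I] [Fintype J]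

/-- `w = (c, λ, μ, γ)` satisfies `c ∇f(x) + ∑ᵢ λᵢ ∇gᵢ(x) + ∑ᵢ μᵢ ∇hᵢ(x) + γ = 0`. -/
def LagrangeStationary (f : (ι → ℝ) → ℝ) (g : I → (ι → ℝ) → ℝ) (h : J → (ι → ℝ) → ℝ)
    (x : ι → ℝ) (w : ℝ × (I → ℝ) × (J → ℝ) × (ι → ℝ)) : Prop :=
  ∀ v : ι → ℝ, w.1 * fderiv ℝ f x v + ∑ i, w.2.1 i * fderiv ℝ (g i) x v
    + ∑ i, w.2.2.1 i * fderiv ℝ (h i) x v + ∑ i, w.2.2.2 i * v i = 0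

def CCMFCQ (g : I → (ι → ℝ) → ℝ) (h : J → (ι → ℝ) → ℝ) (xs : ι → ℝ) : Prop :=
  ∀ (lam' : I → ℝ) (mu' : J → ℝ) (gam' : ι → ℝ),
    (∀ i, 0 ≤ lam' i) → (∀ i, g i xs ≠ 0 → lam' i = 0) →
    (∀ i, xs i ≠ 0 → gam' i = 0) →
    (∀ v : ι → ℝ,
      ∑ i, lam' i * fderiv ℝ (g i) xs v + ∑ i, mu' i * fderiv ℝ (h i) xs v
        + ∑ i, gam' i * v i = 0) →
    lam' = 0 ∧ mu' = 0 ∧ gam' = 0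

def IsSStationary (f : (ι → ℝ) → ℝ) (g : I → (ι → ℝ) → ℝ) (h : J → (ι → ℝ) → ℝ)
    (xs ys : ι → ℝ) : Prop :=
  ∃ (lams : I → ℝ) (mus : J → ℝ) (gams : ι → ℝ),
    (∀ i, 0 ≤ lams i) ∧ (∀ i, lams i * g i xs = 0) ∧
    (∀ i, ys i = 0 → gams i = 0) ∧
    (∀ v : ι → ℝ,
      fderiv ℝ f xs v + ∑ i, lams i * fderiv ℝ (g i) xs v
        + ∑ i, mus i * fderiv ℝ (h i) xs v + ∑ i, gams i * v i = 0)

variable {f : (ι → ℝ) → ℝ} {g : I → (ι → ℝ) → ℝ} {h : J → (ι → ℝ) → ℝ}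

theorem LagrangeStationary.smul {x : ι → ℝ} {w : ℝ × (I → ℝ) × (J → ℝ) × (ι → ℝ)}
    (hw : LagrangeStationary f g h x w) (s : ℝ) : LagrangeStationary f g h x (s • w) := by
  intro v
  simp only [Prod.smul_fst, Prod.smul_snd, Pi.smul_apply, smul_eq_mul, mul_assoc, ← mul_sum,
    ← mul_add, hw v, mul_zero]

theorem lagrangeStationary_of_tendsto {α : Type*} {l : Filter α} [l.NeBot]
    (hf : ContDiff ℝ 1 f) (hg : ∀ i, ContDiff ℝ 1 (g i)) (hh : ∀ i, ContDiff ℝ 1 (h i))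
    {x : α → ι → ℝ} {xs : ι → ℝ} {w : α → ℝ × (I → ℝ) × (J → ℝ) × (ι → ℝ)}
    {ws : ℝ × (I → ℝ) × (J → ℝ) × (ι → ℝ)} (hx : Tendsto x l (𝓝 xs)) (hw : Tendsto w l (𝓝 ws))
    (hstat : ∀ a, LagrangeStationary f g h (x a) (w a)) : LagrangeStationary f g h xs ws := by
  intro v
  have hd : ∀ F : (ι → ℝ) → ℝ, ContDiff ℝ 1 F →
      Tendsto (fun a => fderiv ℝ F (x a) v) l (𝓝 (fderiv ℝ F xs v)) := fun F hF =>
    (((hF.continuous_fderiv one_ne_zero).clm_apply continuous_const).tendsto xs).comp hx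
  have hlim := (((hw.fst_nhds.mul (hd f hf)).add (tendsto_finsetSum univ fun i _ =>
    (hw.snd_nhds.fst_nhds.apply_nhds i).mul (hd _ (hg i)))).add (tendsto_finsetSum univ fun i _ =>
    (hw.snd_nhds.snd_nhds.fst_nhds.apply_nhds i).mul (hd _ (hh i)))).add
    (tendsto_finsetSum univ fun i _ => (hw.snd_nhds.snd_nhds.snd_nhds.apply_nhds i).mul
      (tendsto_const_nhds (x := v i)))
  exact tendsto_nhds_unique (hlim.congr fun a => hstat a v) tendsto_const_nhds

theorem isSStationary_of_lagrangeStationary {xs ys : ι → ℝ} {c : ℝ} {lam : I → ℝ} {mu : J → ℝ}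
    {gam : ι → ℝ} (hmfcq : CCMFCQ g h xs) (hc : 0 ≤ c) (hnorm : c + ‖(lam, mu, gam)‖ = 1)
    (hstat : LagrangeStationary f g h xs (c, lam, mu, gam)) (hlam : ∀ i, 0 ≤ lam i)
    (hlamg : ∀ i, lam i * g i xs = 0) (hgam : ∀ i, ys i = 0 → gam i = 0)
    (hxys : ∀ i, xs i * ys i = 0) : IsSStationary f g h xs ys := by
  have hc0 : c ≠ 0 := by
    rintro rfl
    obtain ⟨rfl, rfl, rfl⟩ := hmfcq lam mu gam hlam
      (fun i hi => (mul_eq_zero.1 (hlamg i)).resolve_right hi)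
      (fun i hi => hgam i ((mul_eq_zero.1 (hxys i)).resolve_left hi))
      (fun v => by simpa using hstat v)
    simp at hnorm
  refine ⟨c⁻¹ • lam, c⁻¹ • mu, c⁻¹ • gam, fun i => smul_nonneg (inv_nonneg.2 hc) (hlam i),
    fun i => ?_, fun i hi => by simp [hgam i hi], fun v => ?_⟩
  · simp [mul_assoc, hlamg i]
  · simpa [inv_mul_cancel₀ hc0] using hstat.smul c⁻¹ v

end Stationarity

theorem scholtes_regularization_converges_to_S_stationary_general (n m p κ : ℕ)
    (f : (Fin n → ℝ) → ℝ) (g : Fin m → (Fin n → ℝ) → ℝ) (h : Fin p → (Fin n → ℝ) → ℝ)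
    (hfd : ContDiff ℝ 1 f) (hgd : ∀ i, ContDiff ℝ 1 (g i)) (hhd : ∀ i, ContDiff ℝ 1 (h i))
    (t : ℕ → ℝ) (ht : ∀ k, 0 < t k) (ht0 : Filter.Tendsto t Filter.atTop (nhds 0))
    (x y : ℕ → Fin n → ℝ) (xs ys : Fin n → ℝ)
    (hconv : Filter.Tendsto (fun k => (x k, y k)) Filter.atTop (nhds (xs, ys)))
    -- feasibility of (xᵏ, yᵏ) for NLP(tᵏ)
    (hy01 : ∀ k i, 0 ≤ y k i ∧ y k i ≤ 1)
    (hxyt : ∀ k i, |x k i * y k i| ≤ t k)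
    (hsum : ∀ k, (n : ℝ) - κ ≤ ∑ i, y k i)
    -- KKT multipliers of NLP(tᵏ) at (xᵏ, yᵏ)
    (lam : ℕ → Fin m → ℝ) (mu : ℕ → Fin p → ℝ) (gamt : ℕ → Fin n → ℝ)
    (delta : ℕ → ℝ) (nu : ℕ → Fin n → ℝ)
    (hstatx : ∀ k (v : Fin n → ℝ),
      fderiv ℝ f (x k) v + ∑ i, lam k i * fderiv ℝ (g i) (x k) v
        + ∑ i, mu k i * fderiv ℝ (h i) (x k) v + ∑ i, gamt k i * y k i * v i = 0)
    (hstaty : ∀ k i, -delta k + nu k i + gamt k i * x k i = 0)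
    (hlam : ∀ k i, 0 ≤ lam k i ∧ lam k i * g i (x k) = 0)
    (hdelta : ∀ k, 0 ≤ delta k ∧ ((∑ i, y k i) ≠ (n : ℝ) - κ → delta k = 0))
    (hgamt : ∀ k i,
      (x k i * y k i = t k → 0 ≤ gamt k i) ∧
      (x k i * y k i = -t k → gamt k i ≤ 0) ∧
      (x k i * y k i ≠ t k ∧ x k i * y k i ≠ -t k → gamt k i = 0))
    (hnu : ∀ k i,
      (y k i = 0 → nu k i ≤ 0) ∧ (y k i = 1 → 0 ≤ nu k i) ∧
      (y k i ≠ 0 ∧ y k i ≠ 1 → nu k i = 0))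
    -- CC-MFCQ at (x*, y*)
    (hmfcq : ∀ (lam' : Fin m → ℝ) (mu' : Fin p → ℝ) (gam' : Fin n → ℝ),
      (∀ i, 0 ≤ lam' i) → (∀ i, g i xs ≠ 0 → lam' i = 0) →
      (∀ i, xs i ≠ 0 → gam' i = 0) →
      (∀ v : Fin n → ℝ,
        ∑ i, lam' i * fderiv ℝ (g i) xs v + ∑ i, mu' i * fderiv ℝ (h i) xs v
          + ∑ i, gam' i * v i = 0) →
      lam' = 0 ∧ mu' = 0 ∧ gam' = 0) :
    -- conclusion: (x*, y*) is S-stationary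
    ∃ (lams : Fin m → ℝ) (mus : Fin p → ℝ) (gams : Fin n → ℝ),
      (∀ i, 0 ≤ lams i) ∧ (∀ i, lams i * g i xs = 0) ∧
      (∀ i, ys i = 0 → gams i = 0) ∧
      (∀ v : Fin n → ℝ,
        fderiv ℝ f xs v + ∑ i, lams i * fderiv ℝ (g i) xs v
          + ∑ i, mus i * fderiv ℝ (h i) xs v + ∑ i, gams i * v i = 0) := by
  have hK : ∀ k, IsScholtesKKTInY (t k) (delta k) ((n : ℝ) - κ) (x k) (y k) (gamt k) (nu k) :=
    fun k => ⟨ht k, fun i => (hy01 k i).1, fun i => (hy01 k i).2, hsum k, (hdelta k).1,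
      (hdelta k).2, hstaty k, fun i => (hgamt k i).2.2, fun i => (hnu k i).1,
      fun i => (hnu k i).2.2⟩
  have hx : Tendsto x atTop (𝓝 xs) := hconv.fst_nhds
  have hy : Tendsto y atTop (𝓝 ys) := hconv.snd_nhds
  have hxys : ∀ i, xs i * ys i = 0 := fun i =>
    tendsto_nhds_unique ((hx.apply_nhds i).mul (hy.apply_nhds i))
      (squeeze_zero_norm (fun k => hxyt k i) ht0)
  obtain ⟨φ, ⟨c, lam', mu', gam'⟩, hφ, hc, hnorm, hw⟩ :=
    exists_subseq_tendsto_normalized fun k => (lam k, mu k, gamt k * y k)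
  have hφ' := hφ.tendsto_atTop
  have hstat : LagrangeStationary f g h xs (c, lam', mu', gam') :=
    lagrangeStationary_of_tendsto hfd hgd hhd (hx.comp hφ') hw fun k =>
      LagrangeStationary.smul (fun v => by simpa using hstatx (φ k) v) _
  have hlam_nonneg : ∀ i, 0 ≤ lam' i := fun i =>
    ge_of_tendsto' (hw.snd_nhds.fst_nhds.apply_nhds i) fun k =>
      mul_nonneg (by positivity) (hlam (φ k) i).1
  have hlam_compl : ∀ i, lam' i * g i xs = 0 := fun i =>
    tendsto_nhds_unique ((hw.snd_nhds.fst_nhds.apply_nhds i).mul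
      ((((hgd i).continuous.tendsto xs).comp hx).comp hφ')) (by simp [mul_assoc, (hlam _ i).2])
  have hgam_zero : ∀ i, ys i = 0 → gam' i = 0 := fun i =>
    apply_eq_zero_of_tendsto_smul_mul (fun k => hK (φ k)) (hy.comp hφ')
      (fun k => by positivity) hw.snd_nhds.snd_nhds.snd_nhds
  exact isSStationary_of_lagrangeStationary hmfcq hc hnorm hstat hlam_nonneg hlam_compl
    hgam_zero hxys

/-- Convergence of the Scholtes-type regularization method: limits of KKT points of the
regularized problems NLP(tᵏ) are S-stationary under CC-MFCQ (Theorem 3.1). -/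
theorem scholtes_regularization_converges_to_S_stationary (n m p κ : ℕ)
    (f : (Fin n → ℝ) → ℝ) (g : Fin m → (Fin n → ℝ) → ℝ) (h : Fin p → (Fin n → ℝ) → ℝ)
    (hfd : ContDiff ℝ 1 f) (hgd : ∀ i, ContDiff ℝ 1 (g i)) (hhd : ∀ i, ContDiff ℝ 1 (h i))
    (t : ℕ → ℝ) (ht : ∀ k, 0 < t k) (ht0 : Filter.Tendsto t Filter.atTop (nhds 0))
    (x y : ℕ → Fin n → ℝ) (xs ys : Fin n → ℝ)
    (hconv : Filter.Tendsto (fun k => (x k, y k)) Filter.atTop (nhds (xs, ys)))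
    -- feasibility of (xᵏ, yᵏ) for NLP(tᵏ)
    (hgf : ∀ k i, g i (x k) ≤ 0) (hhf : ∀ k i, h i (x k) = 0)
    (hy01 : ∀ k i, 0 ≤ y k i ∧ y k i ≤ 1)
    (hxyt : ∀ k i, |x k i * y k i| ≤ t k)
    (hsum : ∀ k, (n : ℝ) - κ ≤ ∑ i, y k i)
    -- KKT multipliers of NLP(tᵏ) at (xᵏ, yᵏ)
    (lam : ℕ → Fin m → ℝ) (mu : ℕ → Fin p → ℝ) (gamt : ℕ → Fin n → ℝ)
    (delta : ℕ → ℝ) (nu : ℕ → Fin n → ℝ)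
    (hstatx : ∀ k (v : Fin n → ℝ),
      fderiv ℝ f (x k) v + ∑ i, lam k i * fderiv ℝ (g i) (x k) v
        + ∑ i, mu k i * fderiv ℝ (h i) (x k) v + ∑ i, gamt k i * y k i * v i = 0)
    (hstaty : ∀ k i, -delta k + nu k i + gamt k i * x k i = 0)
    (hlam : ∀ k i, 0 ≤ lam k i ∧ lam k i * g i (x k) = 0)
    (hdelta : ∀ k, 0 ≤ delta k ∧ ((∑ i, y k i) ≠ (n : ℝ) - κ → delta k = 0))
    (hgamt : ∀ k i,
      (x k i * y k i = t k → 0 ≤ gamt k i) ∧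
      (x k i * y k i = -t k → gamt k i ≤ 0) ∧
      (x k i * y k i ≠ t k ∧ x k i * y k i ≠ -t k → gamt k i = 0))
    (hnu : ∀ k i,
      (y k i = 0 → nu k i ≤ 0) ∧ (y k i = 1 → 0 ≤ nu k i) ∧
      (y k i ≠ 0 ∧ y k i ≠ 1 → nu k i = 0))
    -- CC-MFCQ at (x*, y*)
    (hmfcq : ∀ (lam' : Fin m → ℝ) (mu' : Fin p → ℝ) (gam' : Fin n → ℝ),
      (∀ i, 0 ≤ lam' i) → (∀ i, g i xs ≠ 0 → lam' i = 0) →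
      (∀ i, xs i ≠ 0 → gam' i = 0) →
      (∀ v : Fin n → ℝ,
        ∑ i, lam' i * fderiv ℝ (g i) xs v + ∑ i, mu' i * fderiv ℝ (h i) xs v
          + ∑ i, gam' i * v i = 0) →
      lam' = 0 ∧ mu' = 0 ∧ gam' = 0) :
    -- conclusion: (x*, y*) is S-stationary
    ∃ (lams : Fin m → ℝ) (mus : Fin p → ℝ) (gams : Fin n → ℝ),
      (∀ i, 0 ≤ lams i) ∧ (∀ i, lams i * g i xs = 0) ∧
      (∀ i, ys i = 0 → gams i = 0) ∧
      (∀ v : Fin n → ℝ,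
        fderiv ℝ f xs v + ∑ i, lams i * fderiv ℝ (g i) xs v
          + ∑ i, mus i * fderiv ℝ (h i) xs v + ∑ i, gams i * v i = 0) :=
  scholtes_regularization_converges_to_S_stationary_general n m p κ f g h hfd hgd hhd t ht ht0 x y
    xs ys hconv hy01 hxyt hsum lam mu gamt delta nu hstatx hstaty hlam hdelta hgamt hnu hmfcq
end

section
/- For β ∈ (1/2, 1), the coefficients satisfy ζ_β ≤ η_β ≤ √(β/(1−β)) and (2β−1)/(2√(β(1−β))) ≤ √(β/(1−β)), where ζ_β = −Φ⁻¹(1−β) and η_β = −(∫_{−∞}^{Φ⁻¹(1−β)} t·φ(t) dt)/(1−β), with φ and Φ the standard normal density and cumulative distribution function. Consequently, for any portfolio x with covariance Q ⪰ 0 and mean μ, one has VaR_β(x) ≤ CVaR_β(x) ≤ RCVaR_β(x) and RVaR_β(x) ≤ RCVaR_β(x), where each risk measure equals c_β√(xᵀQx) − μᵀx with the corresponding coefficient c_β. -/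
/-!
Since `∫_{-∞}^q t φ(t) dt = -φ(q)` and `Φ(q) = 1 - β`, the CVaR coefficient is `φ(q) / Φ(q)`.
So `ζ ≤ η` is the Mills-ratio bound `(-q) Φ(q) ≤ φ(q)`, and `η ≤ √(β / (1 - β))` is
`φ(q)² ≤ Φ(q) Φ(-q)`. For `q ≤ 0` the latter follows from Cauchy–Schwarz on `(-∞, q]`,
`φ(q)² ≤ Φ(q) (Φ(q) - q φ(q))`, together with `-2q φ(q) ≤ Φ(-q) - Φ(q)`, as `φ ≥ φ(q)` on
`[q, -q]`; the case `q > 0` follows by symmetry. The robust inequality reduces to `2β - 1 ≤ 2β`,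
and the risk-measure inequalities are the coefficient inequalities scaled by `√(xᵀQx) ≥ 0`.
-/

/-- Standard normal density. -/
noncomputable def normPdf (t : ℝ) : ℝ := Real.exp (-t ^ 2 / 2) / Real.sqrt (2 * Real.pi)

/-- Standard normal cumulative distribution function. -/
noncomputable def normCDF (x : ℝ) : ℝ := ∫ t in Set.Iic x, normPdf t

open Real MeasureTheory Set

theorem integral_Iic_of_hasDerivAt_of_integrable {f f' : ℝ → ℝ}
    (hderiv : ∀ x, HasDerivAt f (f' x) x) (hf : Integrable f) (hf' : Integrable f') (a : ℝ) :
    ∫ x in Iic a, f' x = f a := by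
  have hlim := tendsto_zero_of_hasDerivAt_of_integrableOn_Iic (a := a) (fun x _ => hderiv x)
    hf'.integrableOn hf.integrableOn
  simpa using integral_Iic_of_hasDerivAt_of_tendsto' (fun x _ => hderiv x) hf'.integrableOn hlim

theorem normPdf_eq_exp_mul (t : ℝ) :
    normPdf t = Real.exp (-(1 / 2) * t ^ 2) * (√(2 * π))⁻¹ := by
  rw [normPdf, div_eq_mul_inv]; ring_nf

theorem normPdf_pos (t : ℝ) : 0 < normPdf t := by rw [normPdf]; positivity

theorem normPdf_neg (t : ℝ) : normPdf (-t) = normPdf t := by simp [normPdf]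

theorem normPdf_le_normPdf {s t : ℝ} (h : |t| ≤ |s|) : normPdf s ≤ normPdf t := by
  have : t ^ 2 ≤ s ^ 2 := sq_le_sq.mpr h
  unfold normPdf; gcongr

theorem hasDerivAt_normPdf (t : ℝ) : HasDerivAt normPdf (-(t * normPdf t)) t := by
  have h : HasDerivAt (fun t : ℝ => -t ^ 2 / 2) (-t) t :=
    ((hasDerivAt_pow 2 t).neg.div_const 2).congr_deriv (by push_cast; ring)
  unfold normPdf
  exact (h.exp.div_const _).congr_deriv (by ring)

theorem integrable_normPdf : Integrable normPdf := by
  simp_rw [funext normPdf_eq_exp_mul]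
  exact (integrable_exp_neg_mul_sq (by norm_num)).mul_const _

theorem integrable_mul_normPdf : Integrable fun t => t * normPdf t := by
  simp_rw [normPdf_eq_exp_mul, ← mul_assoc]
  exact (integrable_mul_exp_neg_mul_sq (by norm_num)).mul_const _

theorem integrable_sq_mul_normPdf : Integrable fun t => t ^ 2 * normPdf t := by
  simp_rw [normPdf_eq_exp_mul, ← mul_assoc]
  have h := integrable_rpow_mul_exp_neg_mul_sq (b := 1 / 2) (by norm_num) (s := 2) (by norm_num)
  simp_rw [Real.rpow_two] at h
  exact h.mul_const _

theorem integral_normPdf : ∫ t, normPdf t = 1 := by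
  simp_rw [normPdf_eq_exp_mul]
  rw [integral_mul_const, integral_gaussian, show π / (1 / 2) = 2 * π by ring,
    mul_inv_cancel₀ (by positivity)]

theorem normCDF_pos (x : ℝ) : 0 < normCDF x := by
  rw [normCDF, setIntegral_pos_iff_support_of_nonneg_ae
    (ae_of_all _ fun t => (normPdf_pos t).le) integrable_normPdf.integrableOn,
    Function.support_eq_univ fun t => (normPdf_pos t).ne', univ_inter, volume_Iic]
  exact ENNReal.zero_lt_top

theorem normCDF_add_normCDF_neg (x : ℝ) : normCDF x + normCDF (-x) = 1 := by
  rw [normCDF, normCDF, ← integral_comp_neg_Ioi]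
  simp_rw [normPdf_neg]
  rw [← setIntegral_union (Iic_disjoint_Ioi le_rfl) measurableSet_Ioi
    integrable_normPdf.integrableOn integrable_normPdf.integrableOn, Iic_union_Ioi,
    Measure.restrict_univ, integral_normPdf]

theorem integral_Iic_mul_normPdf (q : ℝ) : ∫ t in Iic q, t * normPdf t = -normPdf q :=
  integral_Iic_of_hasDerivAt_of_integrable
    (fun x => (hasDerivAt_normPdf x).fun_neg.congr_deriv (neg_neg _))
    integrable_normPdf.neg integrable_mul_normPdf q

theorem integral_Iic_sq_mul_normPdf (q : ℝ) :
    ∫ t in Iic q, t ^ 2 * normPdf t = normCDF q - q * normPdf q := by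
  have hderiv (x : ℝ) :
      HasDerivAt (fun t => -(t * normPdf t)) ((x ^ 2 - 1) * normPdf x) x :=
    ((hasDerivAt_id' x).mul (hasDerivAt_normPdf x)).neg.congr_deriv (by ring)
  have hint : Integrable fun t => (t ^ 2 - 1) * normPdf t :=
    (integrable_sq_mul_normPdf.sub integrable_normPdf).congr
      (.of_forall fun t => by simp only [Pi.sub_apply]; ring)
  have hsplit : (fun t => t ^ 2 * normPdf t) = fun t => (t ^ 2 - 1) * normPdf t + normPdf t := by
    ext t; ring
  rw [hsplit, integral_add hint.integrableOn integrable_normPdf.integrableOn,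
    integral_Iic_of_hasDerivAt_of_integrable hderiv integrable_mul_normPdf.neg hint, normCDF]
  ring

theorem neg_mul_normCDF_le_normPdf (q : ℝ) : -q * normCDF q ≤ normPdf q := by
  calc -q * normCDF q = ∫ t in Iic q, -q * normPdf t := (integral_const_mul _ _).symm
    _ ≤ ∫ t in Iic q, -(t * normPdf t) :=
        setIntegral_mono_on (integrable_normPdf.integrableOn.const_mul _)
          integrable_mul_normPdf.integrableOn.neg measurableSet_Iic fun t (ht : t ≤ q) => by
            nlinarith [normPdf_pos t]
    _ = normPdf q := by rw [integral_neg, integral_Iic_mul_normPdf, neg_neg]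

theorem sq_integral_Iic_mul_normPdf_le (q : ℝ) :
    (∫ t in Iic q, t * normPdf t) ^ 2 ≤ normCDF q * ∫ t in Iic q, t ^ 2 * normPdf t := by
  rw [integral_Iic_mul_normPdf, integral_Iic_sq_mul_normPdf]
  set p := normCDF q
  set c := normPdf q
  -- the minimizer of `b ↦ ∫ (t + b)² φ` over `(-∞, q]` is `b = c / p`; scale it by `p`
  have hexpand : ∫ t in Iic q, (p * t + c) ^ 2 * normPdf t = p * (p * (p - q * c) - c ^ 2) := by
    have hsplit : (fun t => (p * t + c) ^ 2 * normPdf t) = fun t =>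
        p ^ 2 * (t ^ 2 * normPdf t) + 2 * p * c * (t * normPdf t) + c ^ 2 * normPdf t := by
      ext t; ring
    have h2 := integrable_sq_mul_normPdf.integrableOn (s := Iic q) |>.const_mul (p ^ 2)
    have h1 := integrable_mul_normPdf.integrableOn (s := Iic q) |>.const_mul (2 * p * c)
    have h0 := integrable_normPdf.integrableOn (s := Iic q) |>.const_mul (c ^ 2)
    rw [hsplit, integral_add ?_ h0, integral_add h2 h1, integral_const_mul, integral_const_mul,
      integral_const_mul, integral_Iic_sq_mul_normPdf, integral_Iic_mul_normPdf, ← normCDF]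
    · ring
    · exact h2.add h1
  have hnonneg : 0 ≤ ∫ t in Iic q, (p * t + c) ^ 2 * normPdf t :=
    setIntegral_nonneg measurableSet_Iic fun t _ => mul_nonneg (sq_nonneg _) (normPdf_pos t).le
  rw [hexpand] at hnonneg
  nlinarith [(mul_nonneg_iff_of_pos_left (normCDF_pos q)).mp hnonneg]

theorem neg_two_mul_mul_normPdf_le {q : ℝ} (hq : q ≤ 0) :
    -2 * q * normPdf q ≤ normCDF (-q) - normCDF q := by
  calc -2 * q * normPdf q = ∫ _ in q..-q, normPdf q := by
        rw [intervalIntegral.integral_const, smul_eq_mul]; ring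
    _ ≤ ∫ t in q..-q, normPdf t :=
        intervalIntegral.integral_mono_on (by linarith) intervalIntegrable_const
          integrable_normPdf.intervalIntegrable fun t ht => normPdf_le_normPdf <| by
            rw [abs_of_nonpos hq]; exact abs_le.mpr ⟨by linarith [ht.1], ht.2⟩
    _ = normCDF (-q) - normCDF q :=
        (intervalIntegral.integral_Iic_sub_Iic integrable_normPdf.integrableOn
          integrable_normPdf.integrableOn).symm

theorem normPdf_sq_le_normCDF_mul_normCDF_neg (q : ℝ) :
    normPdf q ^ 2 ≤ normCDF q * normCDF (-q) := by
  wlog hq : q ≤ 0 generalizing q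
  · simpa [normPdf_neg, mul_comm] using this (-q) (by linarith)
  have hcs := sq_integral_Iic_mul_normPdf_le q
  rw [integral_Iic_mul_normPdf, integral_Iic_sq_mul_normPdf, neg_sq] at hcs
  have hband := neg_two_mul_mul_normPdf_le hq
  have : 0 ≤ -q * normPdf q := mul_nonneg (neg_nonneg.mpr hq) (normPdf_pos q).le
  exact hcs.trans (mul_le_mul_of_nonneg_left (by linarith) (normCDF_pos q).le)

theorem two_mul_sub_one_div_le_sqrt_div {β : ℝ} (h0 : 0 < β) (h1 : β < 1) :
    (2 * β - 1) / (2 * √(β * (1 - β))) ≤ √(β / (1 - β)) := by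
  have hne : 1 - β ≠ 0 := by linarith
  have hprod : √(β / (1 - β)) * √(β * (1 - β)) = β := by
    rw [← sqrt_mul (div_nonneg h0.le (by linarith)),
      show β / (1 - β) * (β * (1 - β)) = β ^ 2 by field_simp, sqrt_sq h0.le]
  rw [div_le_iff₀ (by positivity)]
  nlinarith

theorem risk_coefficients_ordered (β : ℝ) (hβ : 1 / 2 < β) (hβ1 : β < 1)
    (q : ℝ) (hq : normCDF q = 1 - β) :
    -- coefficient inequalities
    (-q ≤ -(∫ t in Set.Iic q, t * normPdf t) / (1 - β)) ∧
    (-(∫ t in Set.Iic q, t * normPdf t) / (1 - β) ≤ Real.sqrt (β / (1 - β))) ∧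
    ((2 * β - 1) / (2 * Real.sqrt (β * (1 - β))) ≤ Real.sqrt (β / (1 - β))) ∧
    -- consequences for the risk measures
    (∀ (n : ℕ) (Q : Matrix (Fin n) (Fin n) ℝ), Q.PosSemidef → ∀ (μ x : Fin n → ℝ),
      let s := Real.sqrt (dotProduct x (Q.mulVec x))
      (-q * s - dotProduct μ x
          ≤ (-(∫ t in Set.Iic q, t * normPdf t) / (1 - β)) * s - dotProduct μ x) ∧
      ((-(∫ t in Set.Iic q, t * normPdf t) / (1 - β)) * s - dotProduct μ x
          ≤ Real.sqrt (β / (1 - β)) * s - dotProduct μ x) ∧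
      ((2 * β - 1) / (2 * Real.sqrt (β * (1 - β))) * s - dotProduct μ x
          ≤ Real.sqrt (β / (1 - β)) * s - dotProduct μ x)) := by
  have hβ0 : 0 < 1 - β := by linarith
  have hη : -(∫ t in Iic q, t * normPdf t) / (1 - β) = normPdf q / (1 - β) := by
    rw [integral_Iic_mul_normPdf, neg_neg]
  have hφ : normPdf q ^ 2 ≤ (1 - β) * β := by
    have hneg : normCDF (-q) = β := by linarith [normCDF_add_normCDF_neg q]
    have h := normPdf_sq_le_normCDF_mul_normCDF_neg q
    rwa [hq, hneg] at h
  have hζη : -q ≤ -(∫ t in Iic q, t * normPdf t) / (1 - β) := by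
    rw [hη, le_div_iff₀ hβ0, ← hq]
    exact neg_mul_normCDF_le_normPdf q
  have hηR : -(∫ t in Iic q, t * normPdf t) / (1 - β) ≤ √(β / (1 - β)) := by
    have := normPdf_pos q
    rw [hη, le_sqrt' (by positivity), div_pow, div_le_div_iff₀ (by positivity) hβ0]
    nlinarith
  have hRR := two_mul_sub_one_div_le_sqrt_div (by linarith) hβ1
  refine ⟨hζη, hηR, hRR, fun n Q _ μ x => ?_⟩
  exact ⟨sub_le_sub_right (mul_le_mul_of_nonneg_right hζη (sqrt_nonneg _)) _,
    sub_le_sub_right (mul_le_mul_of_nonneg_right hηR (sqrt_nonneg _)) _,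
    sub_le_sub_right (mul_le_mul_of_nonneg_right hRR (sqrt_nonneg _)) _⟩
end
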